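/- arXiv:2407.06031 — 8 statements merged into one kernel-verified Lean document; each statement's English description precedes it below -/
import Mathlib

section
/- The map β ↦ i_β, where i_β(a·e_α(g)) = a·β(g)·e_α(g), is a group isomorphism from Z¹(G,A) onto the group of automorphisms of the extension E_α (automorphisms of E_α inducing the identity on the kernel A and on the quotient G). The automorphism i_β equals conjugation by an element of A if and only if β is a coboundary, i.e., β(g) = a·(ᵍa)⁻¹ for some fixed a ∈ A. Consequently, if H¹(G,A) = 0 then every automorphism of the extension E_α is conjugation by an element of A. -/
/-- A 1-cocycle of a group `G` acting on an abelian group `A`. -/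
def IsOneCocycle {G A : Type*} [Group G] [CommGroup A] [MulDistribMulAction G A]
    (β : G → A) : Prop :=
  ∀ g₁ g₂ : G, β (g₁ * g₂) = β g₁ * g₁ • β g₂

/-- A 2-cocycle of a group `G` acting on an abelian group `A`. -/
def IsTwoCocycle {G A : Type*} [Group G] [CommGroup A] [MulDistribMulAction G A]
    (α : G → G → A) : Prop :=
  ∀ g₁ g₂ g₃ : G, g₁ • α g₂ g₃ * α g₁ (g₂ * g₃) = α (g₁ * g₂) g₃ * α g₁ g₂

/-- The multiplication on `E_α` (elements `a·e_α(g)` modelled as pairs `(a, g)`). -/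
def Emul {G A : Type*} [Group G] [CommGroup A] [MulDistribMulAction G A]
    (α : G → G → A) (p q : A × G) : A × G :=
  (p.1 * p.2 • q.1 * α p.2 q.2, p.2 * q.2)

/-- The kernel inclusion `A → E_α`, `a ↦ a·α(1,1)⁻¹·e_α(1)`. -/
def kerIncl {G A : Type*} [Group G] [CommGroup A] [MulDistribMulAction G A]
    (α : G → G → A) (a : A) : A × G :=
  (a * (α 1 1)⁻¹, 1)

/-- The map `i_β : E_α → E_α`, `a·e_α(g) ↦ a·β(g)·e_α(g)`. -/
def iBeta {G A : Type*} [Group G] [CommGroup A] (β : G → A) (p : A × G) : A × G :=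
  (p.1 * β p.2, p.2)

/-- An automorphism of the extension `E_α`: a bijective multiplicative self-map inducing the
identity on the kernel `A` and on the quotient `G`. -/
def IsExtAut {G A : Type*} [Group G] [CommGroup A] [MulDistribMulAction G A]
    (α : G → G → A) (f : A × G → A × G) : Prop :=
  (∀ p q : A × G, f (Emul α p q) = Emul α (f p) (f q)) ∧
  Function.Bijective f ∧
  (∀ a : A, f (kerIncl α a) = kerIncl α a) ∧
  (∀ p : A × G, (f p).2 = p.2)

section Aux
variable {G A : Type*} [Group G] [CommGroup A] [MulDistribMulAction G A]

lemma alpha_one_left {α : G → G → A} (hα : IsTwoCocycle α) (g : G) : α 1 g = α 1 1 := by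
  have h := hα 1 1 g
  simp only [one_smul, one_mul] at h
  exact mul_left_cancel h

lemma alpha_one_right {α : G → G → A} (hα : IsTwoCocycle α) (g : G) : α g 1 = g • α 1 1 := by
  have h := hα g 1 1
  simp only [mul_one] at h
  exact (mul_right_cancel h).symm

lemma beta_one {β : G → A} (hβ : IsOneCocycle β) : β 1 = 1 := by
  have h := hβ 1 1
  simp only [one_mul, one_smul] at h
  exact (left_eq_mul.mp h)

lemma kerIncl_mul_left {α : G → G → A} (hα : IsTwoCocycle α) (a b : A) (g : G) :
    Emul α (kerIncl α a) (b, g) = (a * b, g) := by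
  simp only [Emul, kerIncl, one_smul, one_mul, alpha_one_left hα]
  refine Prod.ext ?_ rfl
  show a * (α 1 1)⁻¹ * b * α 1 1 = a * b
  rw [mul_right_comm a (α 1 1)⁻¹ b, inv_mul_cancel_right]

lemma kerIncl_mul_right {α : G → G → A} (hα : IsTwoCocycle α) (a b : A) (g : G) :
    Emul α (b, g) (kerIncl α a) = (b * g • a, g) := by
  simp only [Emul, kerIncl]
  refine Prod.ext ?_ (mul_one g)
  show b * g • (a * (α 1 1)⁻¹) * α g 1 = b * g • a
  rw [alpha_one_right hα g, smul_mul', smul_inv', mul_assoc b, inv_mul_cancel_right]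

lemma conj_eval {α : G → G → A} (hα : IsTwoCocycle α) (a b : A) (g : G) :
    Emul α (kerIncl α a) (Emul α (b, g) (kerIncl α a⁻¹)) = (a * b * (g • a)⁻¹, g) := by
  rw [kerIncl_mul_right hα, kerIncl_mul_left hα, smul_inv']
  rw [mul_assoc]

end Aux

set_option maxRecDepth 4000

/-- The map `β ↦ i_β` is a group isomorphism from `Z¹(G,A)` onto the group of automorphisms of
the extension `E_α`; `i_β` is conjugation by an element of `A` iff `β` is a coboundary; hence if
`H¹(G,A) = 0` then every automorphism of the extension `E_α` is conjugation by an element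
of `A`. -/
theorem stmt3 {G A : Type*} [Group G] [CommGroup A] [MulDistribMulAction G A]
    (α : G → G → A) (hα : IsTwoCocycle α) :
    (∀ β : G → A, IsOneCocycle β → IsExtAut α (iBeta β)) ∧
    (∀ β β' : G → A, IsOneCocycle β → IsOneCocycle β' →
      iBeta (G := G) (A := A) β = iBeta β' → β = β') ∧
    (∀ β β' : G → A,
      iBeta (G := G) (A := A) (fun g => β g * β' g) = iBeta β ∘ iBeta β') ∧
    (∀ f : A × G → A × G, IsExtAut α f → ∃ β : G → A, IsOneCocycle β ∧ f = iBeta β) ∧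
    (∀ β : G → A, IsOneCocycle β →
      ((∃ a : A, iBeta β =
          fun p => Emul α (kerIncl α a) (Emul α p (kerIncl α a⁻¹))) ↔
        ∃ a : A, ∀ g : G, β g = a * (g • a)⁻¹)) ∧
    ((∀ β : G → A, IsOneCocycle β → ∃ a : A, ∀ g : G, β g = a * (g • a)⁻¹) →
      ∀ f : A × G → A × G, IsExtAut α f →
        ∃ a : A, f = fun p => Emul α (kerIncl α a) (Emul α p (kerIncl α a⁻¹))) := by
  have p1 : ∀ β : G → A, IsOneCocycle β → IsExtAut α (iBeta β) := by
    intro β hβ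
    refine ⟨?_, ?_, ?_, fun p => rfl⟩
    · rintro ⟨a, g⟩ ⟨a', g'⟩
      refine Prod.ext ?_ rfl
      show a * g • a' * α g g' * β (g * g')
          = a * β g * g • (a' * β g') * α g g'
      rw [hβ g g', smul_mul']
      simp only [mul_assoc, mul_comm, mul_left_comm]
    · exact Function.bijective_iff_has_inverse.mpr
        ⟨fun p => (p.1 * (β p.2)⁻¹, p.2),
         fun p => by simp [iBeta], fun p => by simp [iBeta]⟩
    · intro a
      simp [iBeta, kerIncl, beta_one hβ]
  have p4 : ∀ f : A × G → A × G, IsExtAut α f →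
      ∃ β : G → A, IsOneCocycle β ∧ f = iBeta β := by
    intro f hf
    obtain ⟨hmul, hbij, hker, hquo⟩ := hf
    set β : G → A := fun g => (f (1, g)).1 with hβdef
    have hfone : ∀ g, f (1, g) = (β g, g) := fun g => Prod.ext rfl (hquo (1, g))
    have hfeq : f = iBeta β := by
      funext p
      obtain ⟨a, g⟩ := p
      have h1 : ((a, g) : A × G) = Emul α (kerIncl α a) (1, g) := by
        rw [kerIncl_mul_left hα, mul_one]
      rw [h1, hmul, hker, hfone g, kerIncl_mul_left hα, kerIncl_mul_left hα]
      simp [iBeta]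
    refine ⟨β, ?_, hfeq⟩
    intro g g'
    have h := hmul (1, g) (1, g')
    rw [hfeq] at h
    simp only [Emul, iBeta, one_mul, smul_one, mul_one, Prod.mk.injEq] at h
    have h1 := h.1
    rw [mul_comm _ (α g g')] at h1
    exact mul_left_cancel h1
  have conj_form : ∀ (a : A) (β : G → A), (∀ g : G, β g = a * (g • a)⁻¹) →
      iBeta β = fun p => Emul α (kerIncl α a) (Emul α p (kerIncl α a⁻¹)) := by
    intro a β h
    funext p
    obtain ⟨b, g⟩ := p
    rw [conj_eval hα]
    refine Prod.ext ?_ rfl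
    show b * β g = a * b * (g • a)⁻¹
    rw [h g, mul_comm b, mul_assoc, mul_comm (g • a)⁻¹ b, ← mul_assoc]
  have p5 : ∀ β : G → A, IsOneCocycle β →
      ((∃ a : A, iBeta β =
          fun p => Emul α (kerIncl α a) (Emul α p (kerIncl α a⁻¹))) ↔
        ∃ a : A, ∀ g : G, β g = a * (g • a)⁻¹) := by
    intro β hβ
    constructor
    · rintro ⟨a, h⟩
      refine ⟨a, fun g => ?_⟩
      have hg := congrFun h (1, g)
      rw [conj_eval hα] at hg
      simpa [iBeta] using hg
    · rintro ⟨a, h⟩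
      exact ⟨a, conj_form a β h⟩
  refine ⟨p1, ?_, ?_, p4, p5, ?_⟩
  · intro β β' _ _ h
    funext g
    have := congrFun h (1, g)
    simp only [iBeta, one_mul, Prod.mk.injEq] at this
    exact this.1
  · intro β β'
    funext p
    simp [iBeta, Function.comp, mul_assoc, mul_comm, mul_left_comm]
  · intro hcob f hf
    obtain ⟨β, hβ, hfeq⟩ := p4 f hf
    obtain ⟨a, ha⟩ := hcob β hβ
    exact ⟨a, hfeq.trans (conj_form a β ha)⟩
end

section
/- Embed A into the semidirect product A′ ⋊ E_α (where E_α acts on A′ through its projection to G) via a ↦ (f(a)⁻¹, ι(a)), where ι: A → E_α is the kernel inclusion. Then the image of A is a normal subgroup, and the quotient (A′ ⋊ E_α)/A is an extension of G by A′ which is isomorphic, as an extension, to E_{f∘α}. -/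
/-- The multiplication on the semidirect product `A′ ⋊ E_α`, where `E_α` acts on `A′` through its
projection to `G`. -/
def pushMul {G A A' : Type*} [Group G] [CommGroup A] [CommGroup A']
    [MulDistribMulAction G A] [MulDistribMulAction G A']
    (α : G → G → A) (x y : A' × (A × G)) : A' × (A × G) :=
  (x.1 * x.2.2 • y.1, Emul α x.2 y.2)

/-- The embedding `A → A′ ⋊ E_α`, `a ↦ (f(a)⁻¹, ι(a))`, with `ι` the kernel inclusion of `E_α`. -/
def pushEmb {G A A' : Type*} [Group G] [CommGroup A] [CommGroup A']
    [MulDistribMulAction G A] [MulDistribMulAction G A']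
    (f : A →* A') (α : G → G → A) (a : A) : A' × (A × G) :=
  ((f a)⁻¹, (a * (α 1 1)⁻¹, 1))

/-- The quotient map `A′ ⋊ E_α → E_{f∘α}` realizing `(A′ ⋊ E_α)/A ≅ E_{f∘α}`. -/
def pushQuot {G A A' : Type*} [Group G] [CommGroup A] [CommGroup A']
    [MulDistribMulAction G A] [MulDistribMulAction G A']
    (f : A →* A') (x : A' × (A × G)) : A' × G :=
  (x.1 * f x.2.1, x.2.2)

/-- The image of `A` in `A′ ⋊ E_α` (via `a ↦ (f(a)⁻¹, ι(a))`) is a normal subgroup, and the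
quotient `(A′ ⋊ E_α)/A` is an extension of `G` by `A′` isomorphic, as an extension,
to `E_{f∘α}`. -/
theorem stmt4 {G A A' : Type*} [Group G] [CommGroup A] [CommGroup A']
    [MulDistribMulAction G A] [MulDistribMulAction G A']
    (f : A →* A') (hf : ∀ (g : G) (a : A), f (g • a) = g • f a)
    (α : G → G → A) (hα : IsTwoCocycle α) :
    (∀ a b : A, pushEmb f α (a * b) = pushMul α (pushEmb f α a) (pushEmb f α b)) ∧
    (∀ (x : A' × (A × G)) (a : A),
      (∃ b : A, pushMul α x (pushEmb f α a) = pushMul α (pushEmb f α b) x) ∧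
      (∃ b : A, pushMul α (pushEmb f α a) x = pushMul α x (pushEmb f α b))) ∧
    IsTwoCocycle (fun g₁ g₂ => f (α g₁ g₂)) ∧
    (∀ x y : A' × (A × G), pushQuot f (pushMul α x y) =
      Emul (fun g₁ g₂ => f (α g₁ g₂)) (pushQuot f x) (pushQuot f y)) ∧
    Function.Surjective (pushQuot (G := G) f) ∧
    (∀ x y : A' × (A × G),
      pushQuot f x = pushQuot f y ↔ ∃ a : A, pushMul α x (pushEmb f α a) = y) ∧
    (∀ b : A', pushQuot f (b, ((α 1 1)⁻¹, (1 : G))) = (b * (f (α 1 1))⁻¹, (1 : G))) ∧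
    (∀ x : A' × (A × G), (pushQuot f x).2 = x.2.2) := by
  have h1 : ∀ g : G, α g 1 = g • α 1 1 := by
    intro g
    have h := hα g 1 1
    simp only [mul_one] at h
    exact (mul_right_cancel h).symm
  have h2 : ∀ g : G, α 1 g = α 1 1 := by
    intro g
    have h := hα 1 1 g
    simp only [one_mul, one_smul] at h
    exact mul_left_cancel h
  have keyR : ∀ (x : A' × (A × G)) (a : A), pushMul α x (pushEmb f α a) =
      (x.1 * (f (x.2.2 • a))⁻¹, (x.2.1 * x.2.2 • a, x.2.2)) := by
    intro x a
    simp only [pushMul, pushEmb, Emul, mul_one, smul_mul', smul_inv', hf]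
    rw [h1]
    refine Prod.ext rfl (Prod.ext ?_ rfl)
    simp [mul_assoc, h1 x.2.2]
  have keyL : ∀ (x : A' × (A × G)) (b : A), pushMul α (pushEmb f α b) x =
      ((f b)⁻¹ * x.1, (b * x.2.1, x.2.2)) := by
    intro x b
    simp only [pushMul, pushEmb, Emul, one_mul, one_smul, h2]
    refine Prod.ext rfl (Prod.ext ?_ rfl)
    simp [mul_assoc, mul_comm, mul_left_comm]
  refine ⟨?_, ?_, ?_, ?_, ?_, ?_, ?_, ?_⟩
  · intro a b
    rw [keyL]
    simp only [pushEmb, map_mul, mul_inv_rev, Prod.mk.injEq]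
    exact ⟨mul_comm _ _, by simp [mul_assoc, mul_comm, mul_left_comm], trivial⟩
  · intro x a
    constructor
    · refine ⟨x.2.2 • a, ?_⟩
      rw [keyR, keyL]
      exact Prod.ext (mul_comm _ _) (Prod.ext (mul_comm _ _) rfl)
    · refine ⟨x.2.2⁻¹ • a, ?_⟩
      rw [keyR, keyL]
      simp [mul_comm]
  · intro g₁ g₂ g₃
    have h := congrArg f (hα g₁ g₂ g₃)
    simpa only [map_mul, hf] using h
  · intro x y
    obtain ⟨x₁, c, g⟩ := x
    obtain ⟨y₁, d, h⟩ := y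
    simp only [pushQuot, pushMul, Emul, map_mul, hf, smul_mul', Prod.mk.injEq]
    exact ⟨by simp [mul_assoc, mul_comm, mul_left_comm], trivial⟩
  · intro ⟨b, g⟩
    exact ⟨(b, (1, g)), by simp [pushQuot]⟩
  · intro x y
    constructor
    · intro he
      obtain ⟨x₁, c, g⟩ := x
      obtain ⟨y₁, d, h⟩ := y
      simp only [pushQuot, Prod.mk.injEq] at he
      obtain ⟨he1, he2⟩ := he
      refine ⟨g⁻¹ • (c⁻¹ * d), ?_⟩
      rw [keyR]
      simp only [smul_inv_smul, map_mul, map_inv, mul_inv_rev, inv_inv]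
      refine Prod.ext ?_ (Prod.ext (by simp) he2)
      have : y₁ = x₁ * f c * (f d)⁻¹ := by
        rw [he1]; simp [mul_assoc]
      rw [this]
      simp [mul_assoc, mul_comm, mul_left_comm]
    · rintro ⟨a, rfl⟩
      rw [keyR]
      simp only [pushQuot, map_mul, Prod.mk.injEq]
      exact ⟨by simp [mul_assoc, mul_comm, mul_left_comm], trivial⟩
  · intro b
    simp [pushQuot]
  · intro x
    rfl
end

section
/- The image of A in B ⋊ G is a normal subgroup, and the map (B ⋊ G)/A → H ×_{H/B} G/A sending the class of (b,g) to (b·π(g), gA) is a group isomorphism onto the fiber product {(h, gA) ∈ H × G/A : h·B = π(g)·B}. -/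
/-- The multiplication of the semidirect product `B ⋊ G`, where `G` acts on the normal subgroup
`B ◁ H` via `π : G → H` followed by conjugation in `H`. -/
def sdMul {G H : Type*} [Group G] [Group H] (π : G →* H) {B : Subgroup H}
    (hB : B.Normal) (x y : B × G) : B × G :=
  (x.1 * ⟨π x.2 * (y.1 : H) * (π x.2)⁻¹, hB.conj_mem _ y.1.2 (π x.2)⟩, x.2 * y.2)

/-- The embedding `A → B ⋊ G`, `a ↦ (π(a)⁻¹, a)`. -/
def embA {G H : Type*} [Group G] [Group H] (π : G →* H) {A : Subgroup G} {B : Subgroup H}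
    (hAB : ∀ a ∈ A, π a ∈ B) (a : A) : B × G :=
  (⟨(π a)⁻¹, B.inv_mem (hAB a a.2)⟩, (a : G))

/-- The map `B ⋊ G → H × G/A`, `(b, g) ↦ (b·π(g), gA)`. -/
def Fmap {G H : Type*} [Group G] [Group H] (π : G →* H) (A : Subgroup G) {B : Subgroup H}
    (x : B × G) : H × (G ⧸ A) :=
  ((x.1 : H) * π x.2, QuotientGroup.mk x.2)

/-- Let `π : G → H` be surjective, `A ◁ G`, `B ◁ H` with `π(A) ⊆ B`.  The image of `A` in
`B ⋊ G` (via `a ↦ (π(a)⁻¹, a)`) is a normal subgroup, and the map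
`(B ⋊ G)/A → H ×_{H/B} G/A`, `[(b,g)] ↦ (b·π(g), gA)`, is a group isomorphism onto the fiber
product `{(h, gA) : h·B = π(g)·B}`.  (This is encoded by: the embedding is multiplicative, its
image satisfies the normality coset conditions, `Fmap` is multiplicative, its kernel is exactly
the image of `A`, and its range is exactly the fiber product.) -/
theorem stmt5 {G H : Type*} [Group G] [Group H] (π : G →* H)
    (hπ : Function.Surjective π) (A : Subgroup G) (B : Subgroup H)
    [A.Normal] (hB : B.Normal) (hAB : ∀ a ∈ A, π a ∈ B) :
    (∀ a b : A, embA π hAB (a * b) = sdMul π hB (embA π hAB a) (embA π hAB b)) ∧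
    (∀ (x : B × G) (a : A),
      (∃ b : A, sdMul π hB x (embA π hAB a) = sdMul π hB (embA π hAB b) x) ∧
      (∃ b : A, sdMul π hB (embA π hAB a) x = sdMul π hB x (embA π hAB b))) ∧
    (∀ x y : B × G, Fmap π A (sdMul π hB x y) = Fmap π A x * Fmap π A y) ∧
    (∀ x : B × G, Fmap π A x = 1 ↔ ∃ a : A, x = embA π hAB a) ∧
    Set.range (Fmap π A (B := B)) =
      {p : H × (G ⧸ A) | ∃ g : G, QuotientGroup.mk g = p.2 ∧ p.1⁻¹ * π g ∈ B} := by
  have nrm : A.Normal := inferInstance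
  refine ⟨?_, ?_, ?_, ?_, ?_⟩
  · intro a b
    simp only [embA, sdMul, Prod.mk.injEq, Subgroup.coe_mul]
    constructor
    · ext
      push_cast
      simp only [map_mul]
      group
    · trivial
  · intro x a
    constructor
    · refine ⟨⟨x.2 * a * x.2⁻¹, nrm.conj_mem _ a.2 _⟩, ?_⟩
      simp only [embA, sdMul, Prod.mk.injEq]
      constructor
      · ext
        push_cast
        simp only [map_mul, map_inv]
        group
      · group
    · refine ⟨⟨x.2⁻¹ * a * x.2, by simpa using nrm.conj_mem _ a.2 x.2⁻¹⟩, ?_⟩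
      simp only [embA, sdMul, Prod.mk.injEq]
      constructor
      · ext
        push_cast
        simp only [map_mul, map_inv]
        group
      · group
  · intro x y
    simp only [Fmap, sdMul, Prod.mk.injEq, Prod.mk_mul_mk, Subgroup.coe_mul, map_mul,
      QuotientGroup.mk_mul]
    constructor
    · push_cast
      group
    · trivial
  · intro x
    constructor
    · intro h
      simp only [Fmap, Prod.ext_iff, Prod.fst_one, Prod.snd_one] at h
      have hx2 : x.2 ∈ A := (QuotientGroup.eq_one_iff x.2).mp h.2
      refine ⟨⟨x.2, hx2⟩, ?_⟩
      simp only [embA]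
      ext
      · exact eq_inv_of_mul_eq_one_left h.1
      · rfl
    · rintro ⟨a, rfl⟩
      simp only [Fmap, embA, Prod.ext_iff, Prod.fst_one, Prod.snd_one]
      exact ⟨by group, (QuotientGroup.eq_one_iff _).mpr a.2⟩
  · ext ⟨h, q⟩
    simp only [Set.mem_range, Set.mem_setOf_eq]
    constructor
    · rintro ⟨⟨b, g⟩, hx⟩
      simp only [Fmap, Prod.ext_iff] at hx
      refine ⟨g, hx.2, ?_⟩
      rw [← hx.1]
      simpa using hB.conj_mem _ (B.inv_mem b.2) (π g)⁻¹
    · rintro ⟨g, hg, hmem⟩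
      refine ⟨(⟨π g * (h⁻¹ * π g)⁻¹ * (π g)⁻¹, hB.conj_mem _ (B.inv_mem hmem) _⟩, g), ?_⟩
      simp only [Fmap, Prod.ext_iff]
      exact ⟨by group, hg⟩
end

section
/- (a) The natural map ℤ[X] ⊗ A → ℤ[X/G] ⊗ A, induced by sending x ∈ X to its orbit, induces an isomorphism on G-coinvariants: (ℤ[X] ⊗ A)_G ≅ ℤ[X/G] ⊗ A. (b) Let ℤ[X]₀ ⊆ ℤ[X] (resp. ℤ[X/G]₀ ⊆ ℤ[X/G]) denote the subgroup of elements whose coefficients sum to zero. If the natural map ⊕_{[x] ∈ X/G} (G_x)^{ab} ⊗ A → G^{ab} ⊗ A, induced by the inclusions of stabilizers G_x ≤ G, is surjective, then the induced map (ℤ[X]₀ ⊗ A)_G → ℤ[X/G]₀ ⊗ A is also an isomorphism. -/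
open scoped TensorProduct
noncomputable section

/-- The natural map `ℤ[X] ⊗ A → ℤ[X/G] ⊗ A` (with `ℤ[X] ⊗ A` identified with `X →₀ A`),
induced by sending `x ∈ X` to its orbit. -/
def orbMap (G : Type*) {X : Type*} [Group G] [MulAction G X] (A : Type*) [AddCommGroup A]
    (m : X →₀ A) : Quotient (MulAction.orbitRel G X) →₀ A :=
  Finsupp.mapDomain (Quotient.mk (MulAction.orbitRel G X)) m

/-- The subgroup of `ℤ[X] ⊗ A` generated by the elements `m − g·m` (whose quotient is the module
of `G`-coinvariants). -/
def coinvSub (G X : Type*) [Group G] [MulAction G X] (A : Type*) [AddCommGroup A] :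
    AddSubgroup (X →₀ A) :=
  AddSubgroup.closure
    {y | ∃ (m : X →₀ A) (g : G), y = m - Finsupp.mapDomain (fun x => g • x) m}

/-- The subgroup of `ℤ[X]₀ ⊗ A` generated by the elements `m − g·m` with `m` of coefficient-sum
zero. -/
def coinvSub0 (G X : Type*) [Group G] [MulAction G X] (A : Type*) [AddCommGroup A] :
    AddSubgroup (X →₀ A) :=
  AddSubgroup.closure
    {y | ∃ m : X →₀ A, (m.sum fun _ a => a) = 0 ∧
      ∃ g : G, y = m - Finsupp.mapDomain (fun x => g • x) m}

/-! Modulo the relations `m ~ g • m`, every point may be moved to a chosen representative of its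
orbit; this gives (a). For (b) it suffices that the relations `single x a ~ single (g • x) a`
already follow from those among sum-zero elements. Fix `x₀` and `a`: modulo the latter,
`g ↦ [single (g • x₀) a - single x₀ a]` is a homomorphism on `G`, and it kills every stabilizer
`G_y`, since for `g ∈ G_y` this class is the relation `n ~ g • n` of the sum-zero element
`n = single x₀ a - single y a`. Hence it induces a linear map on `G^{ab} ⊗ A` vanishing on the
images of all `G_y^{ab} ⊗ A`, which is zero by hypothesis. -/

open Finsupp MulAction

lemma Finsupp.mapDomain_sub_mapDomain_mem {X Y A : Type*} [AddCommGroup A]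
    {S : AddSubgroup (Y →₀ A)} {f₁ f₂ : X → Y}
    (h : ∀ x a, single (f₁ x) a - single (f₂ x) a ∈ S) (m : X →₀ A) :
    mapDomain f₁ m - mapDomain f₂ m ∈ S := by
  induction m using Finsupp.induction_linear with
  | zero => simp
  | add m n hm hn =>
    rw [mapDomain_add, mapDomain_add, add_sub_add_comm]
    exact add_mem hm hn
  | single x a => simpa only [mapDomain_single] using h x a

lemma Finsupp.sub_mapDomain_mem {X A : Type*} [AddCommGroup A] {S : AddSubgroup (X →₀ A)}
    {f : X → X} (h : ∀ x a, single x a - single (f x) a ∈ S) (m : X →₀ A) :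
    m - mapDomain f m ∈ S := by
  simpa only [mapDomain_id] using mapDomain_sub_mapDomain_mem (f₁ := id) h m

lemma Finsupp.sum_single_sub_single {X A : Type*} [AddCommGroup A] (x y : X) (a : A) :
    ((single x a - single y a).sum fun _ a => a) = 0 := by
  rw [sum_sub_index fun _ _ _ => rfl]
  simp

section Coinvariants

variable {G X : Type*} [Group G] [MulAction G X] {A : Type*} [AddCommGroup A]

lemma orbMap_mapDomain_out (t : Quotient (orbitRel G X) →₀ A) :
    orbMap G A (mapDomain Quotient.out t) = t := by
  rw [orbMap, ← mapDomain_comp, show Quotient.mk _ ∘ Quotient.out = id from funext Quotient.out_eq,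
    mapDomain_id]

lemma sum_mapDomain_out (t : Quotient (orbitRel G X) →₀ A) :
    ((mapDomain Quotient.out t).sum fun _ a => a) = t.sum fun _ a => a :=
  sum_mapDomain_index (fun _ => rfl) fun _ _ _ => rfl

lemma sub_mapDomain_smul_mem_coinvSub (m : X →₀ A) (g : G) :
    m - mapDomain (g • ·) m ∈ coinvSub G X A :=
  AddSubgroup.subset_closure ⟨m, g, rfl⟩

lemma sub_mapDomain_smul_mem_coinvSub0 {m : X →₀ A} (hm : (m.sum fun _ a => a) = 0) (g : G) :
    m - mapDomain (g • ·) m ∈ coinvSub0 G X A :=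
  AddSubgroup.subset_closure ⟨m, hm, g, rfl⟩

lemma orbMap_eq_zero_of_mem_coinvSub {m : X →₀ A} (hm : m ∈ coinvSub G X A) :
    orbMap G A m = 0 := by
  suffices coinvSub G X A ≤ (mapDomain.addMonoidHom (Quotient.mk (orbitRel G X))).ker from this hm
  rw [coinvSub, AddSubgroup.closure_le]
  rintro _ ⟨n, g, rfl⟩
  have hg : Quotient.mk (orbitRel G X) ∘ (g • ·) = Quotient.mk _ :=
    funext fun x => Quotient.sound (mem_orbit x g)
  simp only [SetLike.mem_coe, AddMonoidHom.mem_ker, map_sub, mapDomain.addMonoidHom_apply,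
    ← mapDomain_comp, hg, sub_self]

lemma sub_mapDomain_out_mem_coinvSub (m : X →₀ A) :
    m - mapDomain (fun x => (Quotient.mk (orbitRel G X) x).out) m ∈ coinvSub G X A := by
  refine sub_mapDomain_mem (fun x a => ?_) m
  obtain ⟨g, hg⟩ : (Quotient.mk (orbitRel G X) x).out ∈ orbit G x :=
    Quotient.mk_out (s := orbitRel G X) x
  rw [← hg]
  simpa only [mapDomain_single] using sub_mapDomain_smul_mem_coinvSub (single x a) g

lemma orbMap_eq_zero_iff (m : X →₀ A) : orbMap G A m = 0 ↔ m ∈ coinvSub G X A := by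
  refine ⟨fun h => ?_, orbMap_eq_zero_of_mem_coinvSub⟩
  have hout : mapDomain (fun x => (Quotient.mk (orbitRel G X) x).out) m = 0 := by
    rw [show (fun x => (Quotient.mk (orbitRel G X) x).out) = Quotient.out ∘ Quotient.mk _ from rfl,
      mapDomain_comp, ← orbMap, h, mapDomain_zero]
  simpa only [hout, sub_zero] using sub_mapDomain_out_mem_coinvSub (G := G) m

lemma coinvSub0_le_coinvSub : coinvSub0 G X A ≤ coinvSub G X A :=
  AddSubgroup.closure_mono fun _ ⟨m, _, g, hm⟩ => ⟨m, g, hm⟩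

lemma single_smul_sub_single_smul_mem_coinvSub0 (g : G) (x y : X) (a : A) :
    single (g • x) a - single (g • y) a - (single x a - single y a) ∈ coinvSub0 G X A := by
  have h := sub_mapDomain_smul_mem_coinvSub0 (sum_single_sub_single x y a) g
  rw [mapDomain_sub, mapDomain_single, mapDomain_single] at h
  simpa only [neg_sub] using neg_mem h

variable (G A) in
/-- Multiplicative because `single (g h x₀) - single (g x₀)` is the `g`-translate of the sum-zero
element `single (h x₀) - single x₀`. -/
def orbitDiffHom (x₀ : X) : G →* Multiplicative (A →ₗ[ℤ] (X →₀ A) ⧸ coinvSub0 G X A) where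
  toFun g := .ofAdd
    ((QuotientAddGroup.mk' _).comp (singleAddHom (g • x₀) - singleAddHom x₀)).toIntLinearMap
  map_one' := by
    simp only [one_smul, sub_self, AddMonoidHom.comp_zero]
    rfl
  map_mul' g h := by
    rw [← ofAdd_add]
    congr 1
    ext a
    simp only [LinearMap.add_apply, AddMonoidHom.coe_toIntLinearMap, AddMonoidHom.coe_comp,
      Function.comp_apply, AddMonoidHom.sub_apply, singleAddHom_apply, QuotientAddGroup.mk'_apply,
      ← QuotientAddGroup.mk_add, QuotientAddGroup.eq, mul_smul]
    rw [← neg_mem_iff]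
    convert single_smul_sub_single_smul_mem_coinvSub0 g (h • x₀) x₀ a using 1
    abel

variable (G A) in
def orbitDiffTensor (x₀ : X) :
    Additive (Abelianization G) ⊗[ℤ] A →ₗ[ℤ] (X →₀ A) ⧸ coinvSub0 G X A :=
  TensorProduct.lift
    (MonoidHom.toAdditiveLeft (Abelianization.lift (orbitDiffHom G A x₀))).toIntLinearMap

lemma orbitDiffTensor_tmul (x₀ : X) (g : G) (a : A) :
    orbitDiffTensor G A x₀ (.ofMul (Abelianization.of g) ⊗ₜ a) =
      QuotientAddGroup.mk (single (g • x₀) a - single x₀ a) :=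
  rfl

variable (G A) in
def stabilizerTensorMap (x : X) :
    Additive (Abelianization (stabilizer G x)) ⊗[ℤ] A →ₗ[ℤ] Additive (Abelianization G) ⊗[ℤ] A :=
  TensorProduct.map
    (MonoidHom.toAdditive (Abelianization.map (stabilizer G x).subtype)).toIntLinearMap
    LinearMap.id

lemma orbitDiffTensor_stabilizerTensorMap (x₀ y : X)
    (t : Additive (Abelianization (stabilizer G y)) ⊗[ℤ] A) :
    orbitDiffTensor G A x₀ (stabilizerTensorMap G A y t) = 0 := by
  induction t using TensorProduct.induction_on with
  | zero => simp only [map_zero]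
  | add t t' ht ht' => rw [map_add, map_add, ht, ht', add_zero]
  | tmul u a =>
    obtain ⟨g, hg⟩ := QuotientGroup.mk_surjective u.toMul
    obtain rfl : u = .ofMul (Abelianization.of g) := hg.symm
    have hgy : (g : G) • y = y := g.2
    have hmap : stabilizerTensorMap G A y (.ofMul (Abelianization.of g) ⊗ₜ a) =
        .ofMul (Abelianization.of (g : G)) ⊗ₜ a :=
      rfl
    rw [hmap, orbitDiffTensor_tmul, QuotientAddGroup.eq_zero_iff]
    convert single_smul_sub_single_smul_mem_coinvSub0 (g : G) x₀ y a using 1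
    rw [hgy]
    abel

lemma single_smul_sub_single_mem_coinvSub0
    (hsurj : ⨆ x : X, LinearMap.range (stabilizerTensorMap G A x) = ⊤) (x₀ : X) (g : G) (a : A) :
    single (g • x₀) a - single x₀ a ∈ coinvSub0 G X A := by
  have hzero : orbitDiffTensor G A x₀ = 0 := by
    rw [← LinearMap.ker_eq_top, eq_top_iff, ← hsurj, iSup_le_iff]
    rintro y _ ⟨t, rfl⟩
    exact orbitDiffTensor_stabilizerTensorMap x₀ y t
  rw [← QuotientAddGroup.eq_zero_iff, ← orbitDiffTensor_tmul, hzero, LinearMap.zero_apply]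

lemma coinvSub_le_coinvSub0
    (hsurj : ⨆ x : X, LinearMap.range (stabilizerTensorMap G A x) = ⊤) :
    coinvSub G X A ≤ coinvSub0 G X A := by
  rw [coinvSub, AddSubgroup.closure_le]
  rintro _ ⟨m, g, rfl⟩
  refine sub_mapDomain_mem (fun x a => ?_) m
  simpa only [neg_sub] using neg_mem (single_smul_sub_single_mem_coinvSub0 hsurj x g a)

end Coinvariants

theorem stmt11_general {G X : Type*} [Group G] [MulAction G X]
    (A : Type*) [AddCommGroup A] :
    (Function.Surjective (orbMap G (X := X) A) ∧
      ∀ m : X →₀ A, orbMap G A m = 0 ↔ m ∈ coinvSub G X A) ∧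
    ((⨆ x : X,
        LinearMap.range
          (TensorProduct.map
            (AddMonoidHom.toIntLinearMap
              (MonoidHom.toAdditive
                (Abelianization.map (MulAction.stabilizer G x).subtype)))
            (LinearMap.id : A →ₗ[ℤ] A))) = ⊤ →
      (∀ t : Quotient (MulAction.orbitRel G X) →₀ A, (t.sum fun _ a => a) = 0 →
        ∃ m : X →₀ A, (m.sum fun _ a => a) = 0 ∧ orbMap G A m = t) ∧
      (∀ m : X →₀ A, (m.sum fun _ a => a) = 0 →
        (orbMap G A m = 0 ↔ m ∈ coinvSub0 G X A))) := by
  refine ⟨⟨fun t => ⟨_, orbMap_mapDomain_out t⟩, orbMap_eq_zero_iff⟩, fun hsurj => ⟨?_, ?_⟩⟩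
  · exact fun t ht => ⟨_, (sum_mapDomain_out t).trans ht, orbMap_mapDomain_out t⟩
  · intro m _
    rw [orbMap_eq_zero_iff, (coinvSub_le_coinvSub0 hsurj).antisymm coinvSub0_le_coinvSub]

/-- (a) The natural map `ℤ[X] ⊗ A → ℤ[X/G] ⊗ A` induces an isomorphism
`(ℤ[X] ⊗ A)_G ≅ ℤ[X/G] ⊗ A`.  (b) If the natural map
`⊕_{[x] ∈ X/G} (G_x)^{ab} ⊗ A → G^{ab} ⊗ A` induced by the inclusions of the stabilizers is
surjective, then the induced map `(ℤ[X]₀ ⊗ A)_G → ℤ[X/G]₀ ⊗ A` is also an isomorphism. -/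
theorem stmt11 {G X : Type*} [Group G] [Finite G] [MulAction G X]
    (A : Type*) [AddCommGroup A] :
    (Function.Surjective (orbMap G (X := X) A) ∧
      ∀ m : X →₀ A, orbMap G A m = 0 ↔ m ∈ coinvSub G X A) ∧
    ((⨆ x : X,
        LinearMap.range
          (TensorProduct.map
            (AddMonoidHom.toIntLinearMap
              (MonoidHom.toAdditive
                (Abelianization.map (MulAction.stabilizer G x).subtype)))
            (LinearMap.id : A →ₗ[ℤ] A))) = ⊤ →
      (∀ t : Quotient (MulAction.orbitRel G X) →₀ A, (t.sum fun _ a => a) = 0 →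
        ∃ m : X →₀ A, (m.sum fun _ a => a) = 0 ∧ orbMap G A m = t) ∧
      (∀ m : X →₀ A, (m.sum fun _ a => a) = 0 →
        (orbMap G A m = 0 ↔ m ∈ coinvSub0 G X A))) :=
  stmt11_general A

end
end

section
/- For σ₁, σ₂ ∈ G define β(σ₁,σ₂) = ∏_{η ∈ G/H} ^{s(η)}α( s(η)⁻¹·σ₁·s(σ₁⁻¹η), s(σ₁⁻¹η)⁻¹·σ₂·s(σ₂⁻¹σ₁⁻¹η) ), where for a coset η = gH one writes σ·η = (σg)H; each argument of α lies in H. Then β is a 2-cocycle: β ∈ Z²(G, A). -/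
/-- The 2-cochain on `G` obtained from a 2-cocycle `α` of a finite-index subgroup `H ≤ G` via a
set-theoretic section `s` of `G → G/H`. -/
def corBeta {G A : Type*} [Group G] [CommGroup A] [MulDistribMulAction G A]
    (H : Subgroup G) [Fintype (G ⧸ H)] (α : G → G → A) (s : G ⧸ H → G)
    (σ₁ σ₂ : G) : A :=
  ∏ η : G ⧸ H,
    s η • α ((s η)⁻¹ * σ₁ * s (σ₁⁻¹ • η))
      ((s (σ₁⁻¹ • η))⁻¹ * σ₂ * s (σ₂⁻¹ • σ₁⁻¹ • η))

/-- Let `H ≤ G` be a subgroup of finite index, `A` an abelian `G`-module, `α ∈ Z²(H,A)` and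
`s` a section of `G → G/H`.  Each argument of `α` in the defining formula lies in `H`, and
`β(σ₁,σ₂) = ∏_{η∈G/H} ^{s(η)}α(s(η)⁻¹σ₁s(σ₁⁻¹η), s(σ₁⁻¹η)⁻¹σ₂s(σ₂⁻¹σ₁⁻¹η))` is a 2-cocycle
of `G` with values in `A`. -/
theorem stmt12 {G A : Type*} [Group G] [CommGroup A] [MulDistribMulAction G A]
    (H : Subgroup G) [Fintype (G ⧸ H)]
    (α : G → G → A)
    (hα : ∀ g₁ g₂ g₃ : G, g₁ ∈ H → g₂ ∈ H → g₃ ∈ H →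
      g₁ • α g₂ g₃ * α g₁ (g₂ * g₃) = α (g₁ * g₂) g₃ * α g₁ g₂)
    (s : G ⧸ H → G) (hs : ∀ c : G ⧸ H, QuotientGroup.mk (s c) = c) :
    (∀ (σ : G) (η : G ⧸ H), (s η)⁻¹ * σ * s (σ⁻¹ • η) ∈ H) ∧
    (∀ g₁ g₂ g₃ : G,
      g₁ • corBeta H α s g₂ g₃ * corBeta H α s g₁ (g₂ * g₃) =
        corBeta H α s (g₁ * g₂) g₃ * corBeta H α s g₁ g₂) := by
  classical
  have smul_mk : ∀ (g x : G), (g • (QuotientGroup.mk x : G ⧸ H)) = QuotientGroup.mk (g * x) :=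
    fun g x => rfl
  have memH : ∀ (σ : G) (η : G ⧸ H), (s η)⁻¹ * σ * s (σ⁻¹ • η) ∈ H := by
    intro σ η
    have h1 : (QuotientGroup.mk (σ⁻¹ * s η) : G ⧸ H) = QuotientGroup.mk (s (σ⁻¹ • η)) := by
      rw [hs, ← smul_mk, hs]
    have h2 := QuotientGroup.eq.mp h1
    simpa [mul_inv_rev, mul_assoc] using h2
  refine ⟨memH, fun g₁ g₂ g₃ => ?_⟩
  set u : G → G ⧸ H → G := fun σ η => (s η)⁻¹ * σ * s (σ⁻¹ • η) with hu
  have umem : ∀ (σ : G) (η : G ⧸ H), u σ η ∈ H := memH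
  have ucomp : ∀ (σ₁ σ₂ : G) (η : G ⧸ H),
      u (σ₁ * σ₂) η = u σ₁ η * u σ₂ (σ₁⁻¹ • η) := by
    intro σ₁ σ₂ η
    simp only [hu, mul_inv_rev, mul_smul]
    group
  have key : ∀ (σ : G) (η : G ⧸ H), σ * s (σ⁻¹ • η) = s η * u σ η := by
    intro σ η
    simp only [hu]
    group
  have hB : ∀ σ₁ σ₂ : G, corBeta H α s σ₁ σ₂
      = ∏ η : G ⧸ H, s η • α (u σ₁ η) (u σ₂ (σ₁⁻¹ • η)) := fun _ _ => rfl
  have hsmulB : g₁ • corBeta H α s g₂ g₃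
      = ∏ η : G ⧸ H, s η • (u g₁ η • α (u g₂ (g₁⁻¹ • η)) (u g₃ (g₂⁻¹ • g₁⁻¹ • η))) := by
    have hmp := map_prod (MulDistribMulAction.toMonoidHom A g₁)
      (fun η => s η • α (u g₂ η) (u g₃ (g₂⁻¹ • η))) Finset.univ
    simp only [MulDistribMulAction.toMonoidHom_apply] at hmp
    rw [hB, hmp]
    rw [← Equiv.prod_comp (MulAction.toPerm g₁⁻¹)
      (fun η => g₁ • s η • α (u g₂ η) (u g₃ (g₂⁻¹ • η)))]
    refine Finset.prod_congr rfl fun η _ => ?_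
    simp only [MulAction.toPerm_apply]
    rw [smul_smul, key g₁ η, mul_smul]
  rw [hsmulB, hB, hB, hB, ← Finset.prod_mul_distrib, ← Finset.prod_mul_distrib]
  refine Finset.prod_congr rfl fun η _ => ?_
  rw [ucomp g₂ g₃ (g₁⁻¹ • η), ucomp g₁ g₂ η,
    show (g₁ * g₂)⁻¹ • η = g₂⁻¹ • g₁⁻¹ • η by rw [mul_inv_rev, mul_smul]]
  rw [← smul_mul', ← smul_mul']
  exact congrArg (s η • ·)
    (hα (u g₁ η) (u g₂ (g₁⁻¹ • η)) (u g₃ (g₂⁻¹ • g₁⁻¹ • η)) (umem _ _) (umem _ _) (umem _ _))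
end

section
/- Define N_H(a) = ∏_{h∈H} ʰa and γ: E_α → A by γ(a·e_α(σ)) = N_H(a)·a^{−|H|}·∏_{η∈H} α(η,σ)·α(σ,η)⁻¹. Then γ is a 1-cocycle on E_α with values in A, where E_α acts on A through its projection to G: γ(xy) = γ(x)·^{x̄}γ(y) for all x,y ∈ E_α. Moreover, the restriction of γ to the kernel A (embedded via ι) is the map a ↦ N_H(a)·a^{−|H|}. -/
/-- The map `γ : E_α → A`, `a·e_α(σ) ↦ N_H(a)·a^{−|H|}·∏_{η∈H} α(η,σ)·α(σ,η)⁻¹`. -/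
def gammaMap {G A : Type*} [Group G] [CommGroup A] [MulDistribMulAction G A]
    (H : Subgroup G) [Fintype H] (α : G → G → A) (p : A × G) : A :=
  (∏ h : H, (h : G) • p.1) * (p.1 ^ (Fintype.card H))⁻¹ *
    ∏ h : H, α (h : G) p.2 * (α p.2 (h : G))⁻¹

/-- Re-indexing a product over a normal subgroup via conjugation. -/
lemma reindex_prod {G : Type*} [Group G] (H : Subgroup G) [H.Normal] [Fintype H]
    {A : Type*} [CommMonoid A] (σ : G) (f : G → A) :
    ∏ h : H, f (σ * (h : G)) = ∏ h : H, f ((h : G) * σ) := by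
  rw [← Equiv.prod_comp (MulAut.conjNormal σ).toEquiv (fun h : H => f ((h : G) * σ))]
  refine Finset.prod_congr rfl fun h _ => ?_
  simp only [MulEquiv.toEquiv_eq_coe, MulEquiv.coe_toEquiv, MulAut.conjNormal_apply,
    inv_mul_cancel_right]

/-- For `H ◁ G` normal in a finite group `G`, `γ` is a 1-cocycle on `E_α` with values in `A`
(for the action of `E_α` through `G`), and its restriction to the kernel `A` is
`a ↦ N_H(a)·a^{−|H|}`. -/
theorem stmt14 {G A : Type*} [Group G] [Fintype G] (H : Subgroup G) [H.Normal] [Fintype H]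
    [CommGroup A] [MulDistribMulAction G A]
    (α : G → G → A) (hα : IsTwoCocycle α) :
    (∀ x y : A × G,
      gammaMap H α (Emul α x y) = gammaMap H α x * x.2 • gammaMap H α y) ∧
    (∀ a : A, gammaMap H α (a * (α 1 1)⁻¹, (1 : G)) =
      (∏ h : H, (h : G) • a) * (a ^ (Fintype.card H))⁻¹) := by
  constructor
  · rintro ⟨a, σ⟩ ⟨b, τ⟩
    simp only [Emul, gammaMap]
    -- pointwise consequences of the 2-cocycle identity
    have e1 : ∀ h : H, (h : G) • α σ τ
        = α ((h : G) * σ) τ * α (h : G) σ * (α (h : G) (σ * τ))⁻¹ := by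
      intro h
      rw [eq_mul_inv_iff_mul_eq]
      exact hα (h : G) σ τ
    have e2 : ∀ h : H, σ • α (h : G) τ
        = α (σ * (h : G)) τ * α σ (h : G) * (α σ ((h : G) * τ))⁻¹ := by
      intro h
      rw [eq_mul_inv_iff_mul_eq]
      exact hα σ (h : G) τ
    have e3 : ∀ h : H, (α (σ * τ) (h : G))⁻¹
        = (σ • α τ (h : G))⁻¹ * (α σ (τ * (h : G)))⁻¹ * α σ τ := by
      intro h
      have h3 : α (σ * τ) (h : G) = σ • α τ (h : G) * α σ (τ * (h : G)) * (α σ τ)⁻¹ := by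
        rw [eq_mul_inv_iff_mul_eq]
        exact (hα σ τ (h : G)).symm
      rw [h3]
      simp [mul_inv, inv_inv, mul_comm, mul_left_comm]
    -- rewrite the three big products pointwise
    have Ea : (∏ h : H, (h : G) • (a * σ • b * α σ τ))
        = ∏ h : H, ((h : G) • a * ((h : G) * σ) • b *
            (α ((h : G) * σ) τ * α (h : G) σ * (α (h : G) (σ * τ))⁻¹)) := by
      refine Finset.prod_congr rfl fun h _ => ?_
      rw [smul_mul', smul_mul', smul_smul, e1 h]
    have Ec : (∏ h : H, α (h : G) (σ * τ) * (α (σ * τ) (h : G))⁻¹)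
        = ∏ h : H, (α (h : G) (σ * τ) *
            ((σ • α τ (h : G))⁻¹ * (α σ (τ * (h : G)))⁻¹ * α σ τ)) := by
      refine Finset.prod_congr rfl fun h _ => ?_
      rw [e3 h]
    rw [Ea, Ec]
    have Ed : (∏ h : H, α (h : G) τ * (α τ (h : G))⁻¹)
        = ∏ h : H, (α (h : G) τ * (α τ (h : G))⁻¹) := rfl
    -- distribute the σ-action and split everything into separate products
    simp only [smul_mul', Finset.smul_prod', smul_inv', smul_pow', smul_smul,
      mul_pow, mul_inv, Finset.prod_mul_distrib, Finset.prod_inv_distrib,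
      Finset.prod_const, Finset.card_univ]
    -- rewrite σ • α ↑h τ pointwise
    have E2 : (∏ h : H, σ • α (h : G) τ)
        = (∏ h : H, α (σ * (h : G)) τ) * (∏ h : H, α σ (h : G)) *
          (∏ h : H, α σ ((h : G) * τ))⁻¹ := by
      rw [← Finset.prod_inv_distrib, ← Finset.prod_mul_distrib, ← Finset.prod_mul_distrib]
      exact Finset.prod_congr rfl fun h _ => e2 h
    rw [E2]
    -- re-index the conjugation-shifted products
    have R1 : (∏ h : H, (σ * (h : G)) • b) = ∏ h : H, ((h : G) * σ) • b :=
      reindex_prod H σ (fun g => g • b)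
    have R2 : (∏ h : H, α (σ * (h : G)) τ) = ∏ h : H, α ((h : G) * σ) τ :=
      reindex_prod H σ (fun g => α g τ)
    have R3 : (∏ h : H, α σ (τ * (h : G))) = ∏ h : H, α σ ((h : G) * τ) :=
      reindex_prod H τ (fun g => α σ g)
    rw [R1, R2, R3]
    -- now both sides are products of identical atoms: finish additively
    apply Additive.ofMul.injective
    simp only [ofMul_mul, ofMul_inv, ofMul_pow]
    abel
  · intro a
    have h1g : ∀ g : G, α 1 g = α 1 1 := by
      intro g
      have h := hα 1 1 g
      simp only [one_smul, one_mul] at h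
      exact mul_left_cancel h
    have hg1 : ∀ g : G, g • α 1 1 = α g 1 := by
      intro g
      have h := hα g 1 1
      simp only [mul_one] at h
      exact mul_right_cancel h
    simp only [gammaMap]
    simp only [smul_mul', smul_inv', hg1, h1g, mul_pow, inv_pow, mul_inv, inv_inv,
      Finset.prod_mul_distrib, Finset.prod_inv_distrib, Finset.prod_const, Finset.card_univ]
    apply Additive.ofMul.injective
    simp only [ofMul_mul, ofMul_inv, ofMul_pow]
    abel
end

section
/- Set ν = μ·(ᶜμ) (pointwise product; by the commutation hypothesis this is a group homomorphism ℂ^× → G) and J = μ(−1). Then ν(z) = J·c(ν(z̄))·J⁻¹ for all z ∈ ℂ^×, and J·c(J) = ν(−1). In other words, the pair (ν, J) defines a 1-cocycle of the real Weil group W_{ℂ/ℝ} = ⟨ℂ^×, j : j² = −1, jzj⁻¹ = z̄⟩ with values in G, sending z ↦ ν(z) and j ↦ J. -/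
noncomputable section

/-- Complex conjugation on the units of `ℂ`. -/
def conjU : ℂˣ →* ℂˣ := Units.map (starRingEnd ℂ).toMonoidHom

/-- The real Weil group `W_{ℂ/ℝ} = ⟨ℂ^×, j : j² = −1, jzj⁻¹ = z̄⟩`, modelled as pairs `(z, ε)`
with `(z, false) = z` and `(z, true) = z·j`; this is its multiplication. -/
def Wmul (w₁ w₂ : ℂˣ × Bool) : ℂˣ × Bool :=
  (w₁.1 * (if w₁.2 then conjU w₂.1 else w₂.1) * (if w₁.2 && w₂.2 then -1 else 1),
    xor w₁.2 w₂.2)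

lemma conjU_conjU (z : ℂˣ) : conjU (conjU z) = z := by
  ext
  simp [conjU]

lemma conjU_neg_one : conjU (-1 : ℂˣ) = -1 := by
  ext
  simp [conjU]

/-- Let `G` carry a `Gal(ℂ/ℝ)`-action via `c` and let `μ : ℂ^× → G` be a homomorphism whose
image commutes elementwise with the image of `ᶜμ : z ↦ c(μ(z̄))`.  Set `ν = μ·ᶜμ` and
`J = μ(−1)`.  Then `ν` is a homomorphism, `ν(z) = J·c(ν(z̄))·J⁻¹` and `J·c(J) = ν(−1)`;
in other words `(ν, J)` defines a 1-cocycle of `W_{ℂ/ℝ}` with values in `G` sending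
`z ↦ ν(z)` and `j ↦ J`. -/
theorem stmt16 {G : Type*} [Group G] (c : G →* G) (hc : ∀ g : G, c (c g) = g)
    (μ : ℂˣ →* G) (hcomm : ∀ z w : ℂˣ, Commute (μ z) (c (μ (conjU w)))) :
    (∀ z w : ℂˣ,
      μ (z * w) * c (μ (conjU (z * w))) =
        (μ z * c (μ (conjU z))) * (μ w * c (μ (conjU w)))) ∧
    (∀ z : ℂˣ,
      μ z * c (μ (conjU z)) =
        μ (-1) * c (μ (conjU z) * c (μ (conjU (conjU z)))) * (μ (-1))⁻¹) ∧
    (μ (-1) * c (μ (-1)) = μ (-1) * c (μ (conjU (-1)))) ∧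
    (∃ φ : ℂˣ × Bool → G,
      (∀ w₁ w₂ : ℂˣ × Bool,
        φ (Wmul w₁ w₂) = φ w₁ * (if w₁.2 then c (φ w₂) else φ w₂)) ∧
      (∀ z : ℂˣ, φ (z, false) = μ z * c (μ (conjU z))) ∧
      φ (1, true) = μ (-1)) := by
  have hμ : ∀ a b : ℂˣ, Commute (μ a) (μ b) := fun a b => by
    unfold Commute SemiconjBy
    rw [← map_mul, ← map_mul, mul_comm]
  have h1 : ∀ z w : ℂˣ, μ (z * w) * c (μ (conjU (z * w))) =
      (μ z * c (μ (conjU z))) * (μ w * c (μ (conjU w))) := by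
    intro z w
    rw [map_mul, map_mul, map_mul, map_mul]
    rw [mul_assoc, mul_assoc, ← mul_assoc (μ w), (hcomm w z).eq, mul_assoc]
  have hJ : ∀ z : ℂˣ, Commute (μ (-1)) (μ z * c (μ (conjU z))) := fun z =>
    (hμ (-1) z).mul_right (hcomm (-1) z)
  have h2 : ∀ z : ℂˣ, μ z * c (μ (conjU z)) =
      μ (-1) * c (μ (conjU z) * c (μ (conjU (conjU z)))) * (μ (-1))⁻¹ := by
    intro z
    rw [conjU_conjU, map_mul, hc, ← (hcomm z z).eq, (hJ z).eq, mul_assoc,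
      mul_inv_cancel, mul_one]
  -- `J · c(ν z) = ν(z̄) · J`
  have hswap : ∀ z : ℂˣ, μ (-1) * c (μ z * c (μ (conjU z))) =
      (μ (conjU z) * c (μ z)) * μ (-1) := by
    intro z
    have h := h2 (conjU z)
    rw [conjU_conjU] at h
    rw [h, mul_assoc, inv_mul_cancel, mul_one]
  -- `J · c(J) = ν(-1)`
  have hJcJ : μ (-1) * c (μ (-1)) = μ (-1) * c (μ (conjU (-1))) := by
    rw [conjU_neg_one]
  refine ⟨h1, h2, hJcJ, ?_⟩
  refine ⟨fun w => (μ w.1 * c (μ (conjU w.1))) * (if w.2 then μ (-1) else 1),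
    ?_, fun z => by simp, by simp [conjU_neg_one, ← hJcJ]⟩
  rintro ⟨z₁, b₁⟩ ⟨z₂, b₂⟩
  cases b₁ <;> cases b₂
  · -- false, false
    show μ (z₁ * z₂ * 1) * c (μ (conjU (z₁ * z₂ * 1))) * 1 =
      (μ z₁ * c (μ (conjU z₁)) * 1) * (μ z₂ * c (μ (conjU z₂)) * 1)
    simp only [mul_one]
    exact h1 z₁ z₂
  · -- false, true
    show μ (z₁ * z₂ * 1) * c (μ (conjU (z₁ * z₂ * 1))) * μ (-1) =
      (μ z₁ * c (μ (conjU z₁)) * 1) * (μ z₂ * c (μ (conjU z₂)) * μ (-1))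
    simp only [mul_one]
    rw [h1, mul_assoc]
  · -- true, false
    show μ (z₁ * conjU z₂ * 1) * c (μ (conjU (z₁ * conjU z₂ * 1))) * μ (-1) =
      (μ z₁ * c (μ (conjU z₁)) * μ (-1)) * c (μ z₂ * c (μ (conjU z₂)) * 1)
    simp only [mul_one]
    rw [h1, conjU_conjU, mul_assoc (μ z₁ * c (μ (conjU z₁))) (μ (-1)), hswap z₂]
    group
  · -- true, true
    show μ (z₁ * conjU z₂ * (-1)) * c (μ (conjU (z₁ * conjU z₂ * (-1)))) * 1 =
      (μ z₁ * c (μ (conjU z₁)) * μ (-1)) * c (μ z₂ * c (μ (conjU z₂)) * μ (-1))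
    simp only [mul_one]
    rw [h1, h1, conjU_conjU, conjU_neg_one, map_mul,
      mul_assoc (μ z₁ * c (μ (conjU z₁))) (μ (-1)), ← mul_assoc (μ (-1)), hswap z₂]
    group

end
end

section
/- For α ∈ Z²(G, A) define (nak_s α)(ḡ₁, ḡ₂) = ∏_{h∈H} α(h, s(ḡ₁)s(ḡ₂)s(ḡ₁ḡ₂)⁻¹) · ʰα(s(ḡ₁), s(ḡ₂)) · ʰα(s(ḡ₁)s(ḡ₂)s(ḡ₁ḡ₂)⁻¹, s(ḡ₁ḡ₂))⁻¹, for ḡ₁, ḡ₂ ∈ G/H. Then nak_s α takes values in the invariants A^H, it is a 2-cocycle of G/H with values in A^H (for the induced action of G/H on A^H), and its cohomology class in H²(G/H, A^H) is independent of the choice of section s. -/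
set_option linter.unusedSectionVars false
set_option maxHeartbeats 1000000

/-- The 2-cochain `nak_s α` on `G/H` attached to a 2-cocycle `α` of `G` and a set-theoretic
section `s : G/H → G`. -/
def nakFun {G A : Type*} [Group G] [CommGroup A] [MulDistribMulAction G A]
    (H : Subgroup G) [H.Normal] [Fintype H] (α : G → G → A) (s : G ⧸ H → G)
    (x y : G ⧸ H) : A :=
  ∏ h : H,
    α (h : G) (s x * s y * (s (x * y))⁻¹) * (h : G) • α (s x) (s y) *
      ((h : G) • α (s x * s y * (s (x * y))⁻¹) (s (x * y)))⁻¹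

namespace NakAux

section
variable {G A : Type*} [Group G] [CommGroup A] [MulDistribMulAction G A]
  (H : Subgroup G) [H.Normal] [Fintype H] (α : G → G → A)

/-- the "norm" `∏_{h ∈ H} h • v`. -/
def Nm (v : A) : A := ∏ h : H, (h : G) • v

/-- `T(g) = ∏_{h ∈ H} α(h, g)`. -/
def Tt (g : G) : A := ∏ h : H, α (h : G) g

def Ww (a g : G) : A := ∏ h : H, α a ((h : G) * g)

def Uu (a : G) : A := ∏ h : H, α a (h : G)

lemma Nm_mul (v w : A) : Nm H (v * w) = Nm H v * Nm H w := by
  simp [Nm, smul_mul', Finset.prod_mul_distrib]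

lemma Nm_smul (g : G) (v : A) : g • Nm H v = Nm H (g • v) := by
  unfold Nm
  rw [Finset.smul_prod']
  exact Fintype.prod_equiv (MulAut.conjNormal g).toEquiv _ _ (fun h => by
    rw [← mul_smul, ← mul_smul]
    congr 1
    simp [mul_assoc])

lemma Nm_smul_H (k : H) (v : A) : Nm H ((k : G) • v) = Nm H v := by
  unfold Nm
  exact Fintype.prod_equiv (Equiv.mulRight k) _ _ (fun h => by simp [mul_smul])

lemma Nm_inv_H (k : H) (v : A) : (k : G) • Nm H v = Nm H v := by
  rw [Nm_smul, Nm_smul_H]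

lemma Tt_reindex (k : H) (g : G) : ∏ h : H, α ((h : G) * (k : G)) g = Tt H α g := by
  exact Fintype.prod_equiv (Equiv.mulRight k) _ _ (fun h => by simp)

lemma Ww_eq (a g : G) (k : H) : Ww H α a ((k : G) * g) = Ww H α a g := by
  unfold Ww
  exact Fintype.prod_equiv (Equiv.mulRight k) _ _ (fun h => by simp [mul_assoc])

lemma mem_of_sec (s : G ⧸ H → G) (hs : ∀ x : G ⧸ H, QuotientGroup.mk (s x) = x)
    (x y : G ⧸ H) : s x * s y * (s (x * y))⁻¹ ∈ H := by
  rw [← QuotientGroup.eq_one_iff]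
  have : (QuotientGroup.mk (s x * s y * (s (x * y))⁻¹) : G ⧸ H)
      = QuotientGroup.mk (s x) * QuotientGroup.mk (s y)
        * (QuotientGroup.mk (s (x * y)))⁻¹ := by rfl
  rw [this, hs, hs, hs, mul_inv_cancel]

variable {α} (hα : IsTwoCocycle α)
include hα

/-- Star identity : for k ∈ H, `N(α k g) * T(k g) = T g * T k`. -/
lemma star_id (k : H) (g : G) :
    Nm H (α (k : G) g) * Tt H α ((k : G) * g) = Tt H α g * Tt H α (k : G) := by
  have key : ∀ h : H, (h : G) • α (k : G) g * α (h : G) ((k : G) * g)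
      = α ((h : G) * (k : G)) g * α (h : G) (k : G) := fun h => hα h k g
  calc Nm H (α (k : G) g) * Tt H α ((k : G) * g)
      = ∏ h : H, ((h : G) • α (k : G) g * α (h : G) ((k : G) * g)) := by
        rw [Finset.prod_mul_distrib]; rfl
    _ = ∏ h : H, (α ((h : G) * (k : G)) g * α (h : G) (k : G)) :=
        Finset.prod_congr rfl (fun h _ => key h)
    _ = (∏ h : H, α ((h : G) * (k : G)) g) * ∏ h : H, α (h : G) (k : G) :=
        Finset.prod_mul_distrib
    _ = Tt H α g * Tt H α (k : G) := by rw [Tt_reindex]; rfl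

/-- `T` restricted to `H` is `H`-invariant. -/
lemma Tt_H_smul (k f : H) : (k : G) • Tt H α (f : G) = Tt H α (f : G) := by
  have key : ∀ h : H, (k : G) • α (h : G) (f : G) * α (k : G) ((h : G) * (f : G))
      = α ((k : G) * (h : G)) (f : G) * α (k : G) (h : G) := fun h => hα k h f
  have h1 : (k : G) • Tt H α (f : G) * (∏ h : H, α (k : G) ((h : G) * (f : G)))
      = (∏ h : H, α ((k : G) * (h : G)) (f : G)) * ∏ h : H, α (k : G) (h : G) := by
    unfold Tt
    rw [Finset.smul_prod', ← Finset.prod_mul_distrib, ← Finset.prod_mul_distrib]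
    exact Finset.prod_congr rfl (fun h _ => key h)
  have h2 : (∏ h : H, α ((k : G) * (h : G)) (f : G)) = Tt H α (f : G) := by
    exact Fintype.prod_equiv (Equiv.mulLeft k) _ _ (fun h => by simp)
  have h3 : (∏ h : H, α (k : G) ((h : G) * (f : G))) = ∏ h : H, α (k : G) (h : G) := by
    exact Fintype.prod_equiv (Equiv.mulRight f) _ _ (fun h => by simp)
  rw [h2, h3] at h1
  exact mul_right_cancel h1

/-- identity (III). -/
lemma three (a g : G) :
    a • Tt H α g * Ww H α a g * Tt H α a = Nm H (α a g) * Tt H α (a * g) * Uu H α a := by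
  have h1 : a • Tt H α g * Ww H α a g = (∏ h : H, α (a * (h : G)) g) * Uu H α a := by
    unfold Tt Ww Uu
    rw [Finset.smul_prod', ← Finset.prod_mul_distrib, ← Finset.prod_mul_distrib]
    exact Finset.prod_congr rfl (fun h _ => hα a h g)
  have h2 : (∏ h : H, α (a * (h : G)) g) = ∏ h : H, α ((h : G) * a) g := by
    refine Fintype.prod_equiv (MulAut.conjNormal a).toEquiv _ _ (fun h => ?_)
    congr 1
    simp [mul_assoc]
  have h3 : (∏ h : H, α ((h : G) * a) g) * Tt H α a = Nm H (α a g) * Tt H α (a * g) := by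
    unfold Tt Nm
    rw [← Finset.prod_mul_distrib, ← Finset.prod_mul_distrib]
    exact Finset.prod_congr rfl (fun h _ => (hα h a g).symm)
  calc a • Tt H α g * Ww H α a g * Tt H α a
      = (∏ h : H, α (a * (h : G)) g) * Uu H α a * Tt H α a := by rw [h1]
    _ = ((∏ h : H, α ((h : G) * a) g) * Tt H α a) * Uu H α a := by
        rw [h2]; simp [mul_comm, mul_left_comm, mul_assoc]
    _ = Nm H (α a g) * Tt H α (a * g) * Uu H α a := by rw [h3]

/-- Difference lemma (D). -/
lemma diffD (a b : G) (k : H) :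
    a • Tt H α ((k : G) * b) * Nm H (α a b) * Tt H α (a * b)
      = a • Tt H α b * Nm H (α a ((k : G) * b)) * Tt H α (a * ((k : G) * b)) := by
  have e1 := three H hα a ((k : G) * b)
  have e2 := three H hα a b
  rw [Ww_eq] at e1
  have key : (a • Tt H α ((k : G) * b) * Nm H (α a b) * Tt H α (a * b))
        * (Ww H α a b * Tt H α a * Uu H α a)
      = (a • Tt H α b * Nm H (α a ((k : G) * b)) * Tt H α (a * ((k : G) * b)))
        * (Ww H α a b * Tt H α a * Uu H α a) := by
    calc (a • Tt H α ((k : G) * b) * Nm H (α a b) * Tt H α (a * b))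
          * (Ww H α a b * Tt H α a * Uu H α a)
        = (a • Tt H α ((k : G) * b) * Ww H α a b * Tt H α a)
            * (Nm H (α a b) * Tt H α (a * b) * Uu H α a) := by
          simp [mul_comm, mul_left_comm, mul_assoc]
      _ = (Nm H (α a ((k : G) * b)) * Tt H α (a * ((k : G) * b)) * Uu H α a)
            * (a • Tt H α b * Ww H α a b * Tt H α a) := by rw [e1, e2]
      _ = _ := by simp [mul_comm, mul_left_comm, mul_assoc]
  exact mul_right_cancel key


/-- abstract form of the key computation for the cocycle identity. -/
lemma Qgen (f1 : H) (d c : G) :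
    Nm H (α ((f1 : G) * d) c) * Tt H α ((f1 : G) * (d * c)) * Tt H α d
      = Tt H α (d * c) * Nm H (α d c) * Tt H α ((f1 : G) * d) := by
  have S1 := star_id H hα f1 (d * c)
  have S2 := star_id H hα f1 d
  have C2 := hα (f1 : G) d c
  have NH2 := Nm_smul_H H f1 (α d c)
  have key : (Nm H (α ((f1 : G) * d) c) * Tt H α ((f1 : G) * (d * c)) * Tt H α d)
        * (Nm H (α (f1 : G) (d * c)) * Nm H (α (f1 : G) d))
      = (Tt H α (d * c) * Nm H (α d c) * Tt H α ((f1 : G) * d))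
        * (Nm H (α (f1 : G) (d * c)) * Nm H (α (f1 : G) d)) := by
    calc (Nm H (α ((f1 : G) * d) c) * Tt H α ((f1 : G) * (d * c)) * Tt H α d)
          * (Nm H (α (f1 : G) (d * c)) * Nm H (α (f1 : G) d))
        = (Nm H (α (f1 : G) (d * c)) * Tt H α ((f1 : G) * (d * c)))
            * (Nm H (α ((f1 : G) * d) c * α (f1 : G) d) * Tt H α d) := by
          rw [Nm_mul]; simp [mul_comm, mul_left_comm, mul_assoc]
      _ = (Tt H α (d * c) * Tt H α (f1 : G))
            * (Nm H ((f1 : G) • α d c * α (f1 : G) (d * c)) * Tt H α d) := by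
          rw [S1, ← C2]
      _ = (Nm H ((f1 : G) • α d c) * Nm H (α (f1 : G) (d * c)))
            * (Tt H α (d * c) * Tt H α (f1 : G) * Tt H α d) := by
          rw [Nm_mul]; simp [mul_comm, mul_left_comm, mul_assoc]
      _ = (Nm H (α d c) * Nm H (α (f1 : G) (d * c)))
            * (Tt H α (d * c) * Tt H α (f1 : G) * Tt H α d) := by rw [NH2]
      _ = (Tt H α (d * c) * Nm H (α d c) * Nm H (α (f1 : G) (d * c)))
            * (Tt H α d * Tt H α (f1 : G)) := by
          simp [mul_comm, mul_left_comm, mul_assoc]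
      _ = (Tt H α (d * c) * Nm H (α d c) * Nm H (α (f1 : G) (d * c)))
            * (Nm H (α (f1 : G) d) * Tt H α ((f1 : G) * d)) := by rw [S2]
      _ = _ := by simp [mul_comm, mul_left_comm, mul_assoc]
  exact mul_right_cancel key

/-- abstract form of the key computation for independence of the section. -/
lemma K2gen (tx : H) (a b' : G) :
    Tt H α (((tx : G) * a) * b') * Nm H (α ((tx : G) * a) b') * Tt H α a
      = Tt H α ((tx : G) * a) * Nm H (α a b') * Tt H α (a * b') := by
  have S3 := star_id H hα tx (a * b')
  have S4 := star_id H hα tx a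
  have C3 := hα (tx : G) a b'
  have NH3 := Nm_smul_H H tx (α a b')
  have hassoc : ((tx : G) * a) * b' = (tx : G) * (a * b') := by rw [mul_assoc]
  have key : (Tt H α (((tx : G) * a) * b') * Nm H (α ((tx : G) * a) b') * Tt H α a)
        * (Nm H (α (tx : G) (a * b')) * Nm H (α (tx : G) a))
      = (Tt H α ((tx : G) * a) * Nm H (α a b') * Tt H α (a * b'))
        * (Nm H (α (tx : G) (a * b')) * Nm H (α (tx : G) a)) := by
    calc (Tt H α (((tx : G) * a) * b') * Nm H (α ((tx : G) * a) b') * Tt H α a)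
          * (Nm H (α (tx : G) (a * b')) * Nm H (α (tx : G) a))
        = (Nm H (α (tx : G) (a * b')) * Tt H α ((tx : G) * (a * b')))
            * (Nm H (α ((tx : G) * a) b' * α (tx : G) a) * Tt H α a) := by
          rw [hassoc, Nm_mul]; simp [mul_comm, mul_left_comm, mul_assoc]
      _ = (Tt H α (a * b') * Tt H α (tx : G))
            * (Nm H ((tx : G) • α a b' * α (tx : G) (a * b')) * Tt H α a) := by
          rw [S3, ← C3]
      _ = (Nm H ((tx : G) • α a b') * Nm H (α (tx : G) (a * b')))
            * (Tt H α (a * b') * Tt H α (tx : G) * Tt H α a) := by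
          rw [Nm_mul]; simp [mul_comm, mul_left_comm, mul_assoc]
      _ = (Nm H (α a b') * Nm H (α (tx : G) (a * b')))
            * (Tt H α (a * b') * Tt H α (tx : G) * Tt H α a) := by rw [NH3]
      _ = (Nm H (α a b') * Nm H (α (tx : G) (a * b')) * Tt H α (a * b'))
            * (Tt H α a * Tt H α (tx : G)) := by
          simp [mul_comm, mul_left_comm, mul_assoc]
      _ = (Nm H (α a b') * Nm H (α (tx : G) (a * b')) * Tt H α (a * b'))
            * (Nm H (α (tx : G) a) * Tt H α ((tx : G) * a)) := by rw [S4]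
      _ = _ := by simp [mul_comm, mul_left_comm, mul_assoc]
  exact mul_right_cancel key

lemma nak_key' (a b d : G) (hmem : a * b * d⁻¹ ∈ H) :
    (∏ h : H, α (h : G) (a * b * d⁻¹) * (h : G) • α a b
        * ((h : G) • α (a * b * d⁻¹) d)⁻¹) * Tt H α d
      = Tt H α (a * b) * Nm H (α a b) := by
  have hfd : (a * b * d⁻¹) * d = a * b := by simp [mul_assoc]
  have hterm : ∀ h : H, α (h : G) (a * b * d⁻¹) * (h : G) • α a b
        * ((h : G) • α (a * b * d⁻¹) d)⁻¹
      = (h : G) • α a b * α (h : G) (a * b) * (α ((h : G) * (a * b * d⁻¹)) d)⁻¹ := by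
    intro h
    have hc := hα (h : G) (a * b * d⁻¹) d
    rw [hfd] at hc
    have key : (α (h : G) (a * b * d⁻¹) * (h : G) • α a b
          * ((h : G) • α (a * b * d⁻¹) d)⁻¹)
        * ((h : G) • α (a * b * d⁻¹) d * α ((h : G) * (a * b * d⁻¹)) d)
      = ((h : G) • α a b * α (h : G) (a * b) * (α ((h : G) * (a * b * d⁻¹)) d)⁻¹)
        * ((h : G) • α (a * b * d⁻¹) d * α ((h : G) * (a * b * d⁻¹)) d) := by
      calc _ = ((h : G) • α a b)
            * (α ((h : G) * (a * b * d⁻¹)) d * α (h : G) (a * b * d⁻¹)) := by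
              simp [mul_comm, mul_left_comm, mul_assoc]
        _ = ((h : G) • α a b)
            * ((h : G) • α (a * b * d⁻¹) d * α (h : G) (a * b)) := by rw [← hc]
        _ = _ := by simp [mul_comm, mul_left_comm, mul_assoc]
    exact mul_right_cancel key
  have hre : (∏ h : H, α ((h : G) * (a * b * d⁻¹)) d) = Tt H α d :=
    Tt_reindex H α ⟨a * b * d⁻¹, hmem⟩ d
  calc (∏ h : H, α (h : G) (a * b * d⁻¹) * (h : G) • α a b
        * ((h : G) • α (a * b * d⁻¹) d)⁻¹) * Tt H α d
      = (∏ h : H, (h : G) • α a b * α (h : G) (a * b)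
          * (α ((h : G) * (a * b * d⁻¹)) d)⁻¹) * Tt H α d := by
        rw [Finset.prod_congr rfl (fun h _ => hterm h)]
    _ = Nm H (α a b) * Tt H α (a * b)
          * (∏ h : H, α ((h : G) * (a * b * d⁻¹)) d)⁻¹ * Tt H α d := by
        rw [Finset.prod_mul_distrib, Finset.prod_mul_distrib, Finset.prod_inv_distrib]; rfl
    _ = Nm H (α a b) * Tt H α (a * b) * (Tt H α d)⁻¹ * Tt H α d := by rw [hre]
    _ = Tt H α (a * b) * Nm H (α a b) := by simp [mul_comm, mul_left_comm, mul_assoc]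

lemma nak_key (s : G ⧸ H → G) (hs : ∀ x : G ⧸ H, QuotientGroup.mk (s x) = x)
    (x y : G ⧸ H) :
    nakFun H α s x y * Tt H α (s (x * y))
      = Tt H α (s x * s y) * Nm H (α (s x) (s y)) :=
  nak_key' H hα (s x) (s y) (s (x * y)) (mem_of_sec H s hs x y)

end

end NakAux

/-- `nak_s α` takes values in the invariants `A^H`, is a 2-cocycle of `G/H` with values in `A^H`
(for the induced action, given on invariants via the section `s`), and its cohomology class in
`H²(G/H, A^H)` is independent of the choice of section `s`. -/
theorem stmt17 {G A : Type*} [Group G] [CommGroup A] [MulDistribMulAction G A]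
    (H : Subgroup G) [H.Normal] [Fintype H]
    (α : G → G → A) (hα : IsTwoCocycle α)
    (s : G ⧸ H → G) (hs : ∀ x : G ⧸ H, QuotientGroup.mk (s x) = x) :
    (∀ (x y : G ⧸ H) (h : H), (h : G) • nakFun H α s x y = nakFun H α s x y) ∧
    (∀ x y z : G ⧸ H,
      s x • nakFun H α s y z * nakFun H α s x (y * z) =
        nakFun H α s (x * y) z * nakFun H α s x y) ∧
    (∀ s' : G ⧸ H → G, (∀ x : G ⧸ H, QuotientGroup.mk (s' x) = x) →
      ∃ β : G ⧸ H → A, (∀ (x : G ⧸ H) (h : H), (h : G) • β x = β x) ∧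
        ∀ x y : G ⧸ H,
          nakFun H α s' x y =
            nakFun H α s x y * β (x * y) * (β x)⁻¹ * (s x • β y)⁻¹) := by
  open NakAux in
  refine ⟨?_, ?_, ?_⟩
  · -- Part 1: H-invariance
    intro x y k
    have hmem := mem_of_sec H s hs x y
    have E4 := nak_key H hα s hs x y
    have S := star_id H hα (⟨s x * s y * (s (x * y))⁻¹, hmem⟩ : H) (s (x * y))
    have hfd : ((⟨s x * s y * (s (x * y))⁻¹, hmem⟩ : H) : G) * s (x * y) = s x * s y := by
      simp [mul_assoc]
    rw [hfd] at S
    have key : (nakFun H α s x y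
          * Nm H (α ((⟨s x * s y * (s (x * y))⁻¹, hmem⟩ : H) : G) (s (x * y))))
          * Tt H α (s (x * y))
        = (Tt H α ((⟨s x * s y * (s (x * y))⁻¹, hmem⟩ : H) : G) * Nm H (α (s x) (s y)))
          * Tt H α (s (x * y)) := by
      calc (nakFun H α s x y
            * Nm H (α ((⟨s x * s y * (s (x * y))⁻¹, hmem⟩ : H) : G) (s (x * y))))
            * Tt H α (s (x * y))
          = (nakFun H α s x y * Tt H α (s (x * y)))
              * Nm H (α ((⟨s x * s y * (s (x * y))⁻¹, hmem⟩ : H) : G) (s (x * y))) := by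
            simp [mul_comm, mul_left_comm, mul_assoc]
        _ = (Tt H α (s x * s y) * Nm H (α (s x) (s y)))
              * Nm H (α ((⟨s x * s y * (s (x * y))⁻¹, hmem⟩ : H) : G) (s (x * y))) := by
            rw [E4]
        _ = (Nm H (α ((⟨s x * s y * (s (x * y))⁻¹, hmem⟩ : H) : G) (s (x * y)))
              * Tt H α (s x * s y)) * Nm H (α (s x) (s y)) := by
            simp [mul_comm, mul_left_comm, mul_assoc]
        _ = (Tt H α (s (x * y))
              * Tt H α ((⟨s x * s y * (s (x * y))⁻¹, hmem⟩ : H) : G))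
              * Nm H (α (s x) (s y)) := by rw [S]
        _ = _ := by simp [mul_comm, mul_left_comm, mul_assoc]
    have key2 := mul_right_cancel key
    have hnak : nakFun H α s x y
        = Tt H α ((⟨s x * s y * (s (x * y))⁻¹, hmem⟩ : H) : G) * Nm H (α (s x) (s y))
          * (Nm H (α ((⟨s x * s y * (s (x * y))⁻¹, hmem⟩ : H) : G) (s (x * y))))⁻¹ := by
      rw [← key2]; simp [mul_comm, mul_left_comm, mul_assoc]
    rw [hnak, smul_mul', smul_mul', smul_inv']
    rw [Tt_H_smul H hα k ⟨s x * s y * (s (x * y))⁻¹, hmem⟩, Nm_inv_H, Nm_inv_H]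
  · -- Part 2: cocycle identity
    intro x y z
    have hmxy := mem_of_sec H s hs x y
    have hmyz := mem_of_sec H s hs y z
    have hab : ((⟨s x * s y * (s (x * y))⁻¹, hmxy⟩ : H) : G) * s (x * y) = s x * s y := by
      simp [mul_assoc]
    have hbc : ((⟨s y * s z * (s (y * z))⁻¹, hmyz⟩ : H) : G) * s (y * z) = s y * s z := by
      simp [mul_assoc]
    have E1 := nak_key H hα s hs y z
    have E2 := nak_key H hα s hs x (y * z)
    have E3 := nak_key H hα s hs (x * y) z
    have hm : s ((x * y) * z) = s (x * (y * z)) := by rw [mul_assoc]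
    rw [hm] at E3
    have E4 := nak_key H hα s hs x y
    have D1 := diffD H hα (s x) (s (y * z)) (⟨s y * s z * (s (y * z))⁻¹, hmyz⟩ : H)
    rw [hbc] at D1
    have C1 := hα (s x) (s y) (s z)
    have S1 := star_id H hα (⟨s x * s y * (s (x * y))⁻¹, hmxy⟩ : H) (s (x * y) * s z)
    have S2 := star_id H hα (⟨s x * s y * (s (x * y))⁻¹, hmxy⟩ : H) (s (x * y))
    have C2 := hα ((⟨s x * s y * (s (x * y))⁻¹, hmxy⟩ : H) : G) (s (x * y)) (s z)
    have NH2 := Nm_smul_H H (⟨s x * s y * (s (x * y))⁻¹, hmxy⟩ : H) (α (s (x * y)) (s z))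
    have h5 : s x * (s y * s z)
        = ((⟨s x * s y * (s (x * y))⁻¹, hmxy⟩ : H) : G) * (s (x * y) * s z) := by
      conv_lhs => rw [← mul_assoc, ← hab, mul_assoc]
    have Q : Nm H (α (s x * s y) (s z)) * Tt H α (s x * (s y * s z)) * Tt H α (s (x * y))
        = Tt H α (s (x * y) * s z) * Nm H (α (s (x * y)) (s z)) * Tt H α (s x * s y) := by
      have Q0 := Qgen H hα (⟨s x * s y * (s (x * y))⁻¹, hmxy⟩ : H) (s (x * y)) (s z)
      rw [hab, ← h5] at Q0
      exact Q0
    have key : (s x • nakFun H α s y z * nakFun H α s x (y * z))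
          * (s x • Tt H α (s (y * z)) * Tt H α (s (x * (y * z))) * Tt H α (s (x * y))
            * Nm H (α (s x) (s (y * z))) * Tt H α (s x * s (y * z)))
        = (nakFun H α s (x * y) z * nakFun H α s x y)
          * (s x • Tt H α (s (y * z)) * Tt H α (s (x * (y * z))) * Tt H α (s (x * y))
            * Nm H (α (s x) (s (y * z))) * Tt H α (s x * s (y * z))) := by
      calc (s x • nakFun H α s y z * nakFun H α s x (y * z))
            * (s x • Tt H α (s (y * z)) * Tt H α (s (x * (y * z))) * Tt H α (s (x * y))
              * Nm H (α (s x) (s (y * z))) * Tt H α (s x * s (y * z)))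
          = (s x • (nakFun H α s y z * Tt H α (s (y * z))))
              * (nakFun H α s x (y * z) * Tt H α (s (x * (y * z))))
              * (Tt H α (s (x * y)) * Nm H (α (s x) (s (y * z)))
                * Tt H α (s x * s (y * z))) := by
            rw [smul_mul']; simp [mul_comm, mul_left_comm, mul_assoc]
        _ = (s x • (Tt H α (s y * s z) * Nm H (α (s y) (s z))))
              * (Tt H α (s x * s (y * z)) * Nm H (α (s x) (s (y * z))))
              * (Tt H α (s (x * y)) * Nm H (α (s x) (s (y * z)))
                * Tt H α (s x * s (y * z))) := by rw [E1, E2]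
        _ = (s x • Tt H α (s y * s z) * Nm H (α (s x) (s (y * z)))
              * Tt H α (s x * s (y * z)))
              * Nm H (s x • α (s y) (s z))
              * (Tt H α (s (x * y)) * Nm H (α (s x) (s (y * z)))
                * Tt H α (s x * s (y * z))) := by
            rw [smul_mul', Nm_smul]; simp [mul_comm, mul_left_comm, mul_assoc]
        _ = (s x • Tt H α (s (y * z)) * Nm H (α (s x) (s y * s z))
              * Tt H α (s x * (s y * s z)))
              * Nm H (s x • α (s y) (s z))
              * (Tt H α (s (x * y)) * Nm H (α (s x) (s (y * z)))
                * Tt H α (s x * s (y * z))) := by rw [D1]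
        _ = Nm H (s x • α (s y) (s z) * α (s x) (s y * s z))
              * (Tt H α (s x * (s y * s z)) * Tt H α (s (x * y)))
              * (s x • Tt H α (s (y * z)) * Nm H (α (s x) (s (y * z)))
                * Tt H α (s x * s (y * z))) := by
            rw [Nm_mul]; simp [mul_comm, mul_left_comm, mul_assoc]
        _ = Nm H (α (s x * s y) (s z) * α (s x) (s y))
              * (Tt H α (s x * (s y * s z)) * Tt H α (s (x * y)))
              * (s x • Tt H α (s (y * z)) * Nm H (α (s x) (s (y * z)))
                * Tt H α (s x * s (y * z))) := by rw [C1]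
        _ = (Nm H (α (s x * s y) (s z)) * Tt H α (s x * (s y * s z)) * Tt H α (s (x * y)))
              * Nm H (α (s x) (s y))
              * (s x • Tt H α (s (y * z)) * Nm H (α (s x) (s (y * z)))
                * Tt H α (s x * s (y * z))) := by
            rw [Nm_mul]; simp [mul_comm, mul_left_comm, mul_assoc]
        _ = (Tt H α (s (x * y) * s z) * Nm H (α (s (x * y)) (s z)) * Tt H α (s x * s y))
              * Nm H (α (s x) (s y))
              * (s x • Tt H α (s (y * z)) * Nm H (α (s x) (s (y * z)))
                * Tt H α (s x * s (y * z))) := by rw [Q]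
        _ = (Tt H α (s (x * y) * s z) * Nm H (α (s (x * y)) (s z)))
              * (Tt H α (s x * s y) * Nm H (α (s x) (s y)))
              * (s x • Tt H α (s (y * z)) * Nm H (α (s x) (s (y * z)))
                * Tt H α (s x * s (y * z))) := by
            simp [mul_comm, mul_left_comm, mul_assoc]
        _ = (nakFun H α s (x * y) z * Tt H α (s (x * (y * z))))
              * (nakFun H α s x y * Tt H α (s (x * y)))
              * (s x • Tt H α (s (y * z)) * Nm H (α (s x) (s (y * z)))
                * Tt H α (s x * s (y * z))) := by rw [E3, E4]
        _ = _ := by simp [mul_comm, mul_left_comm, mul_assoc]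
    exact mul_right_cancel key
  · -- Part 3: independence of the section
    intro s' hs'
    have hmem : ∀ x : G ⧸ H, s' x * (s x)⁻¹ ∈ H := by
      intro x
      rw [← QuotientGroup.eq_one_iff]
      have : (QuotientGroup.mk (s' x * (s x)⁻¹) : G ⧸ H)
          = QuotientGroup.mk (s' x) * (QuotientGroup.mk (s x))⁻¹ := rfl
      rw [this, hs', hs, mul_inv_cancel]
    refine ⟨fun x => Nm H (α ((⟨s' x * (s x)⁻¹, hmem x⟩ : H) : G) (s x))
      * (Tt H α ((⟨s' x * (s x)⁻¹, hmem x⟩ : H) : G))⁻¹, ?_, ?_⟩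
    · intro x k
      rw [smul_mul', smul_inv', Nm_inv_H, Tt_H_smul H hα k ⟨s' x * (s x)⁻¹, hmem x⟩]
    · intro x y
      have hts : ∀ x : G ⧸ H, ((⟨s' x * (s x)⁻¹, hmem x⟩ : H) : G) * s x = s' x := by
        intro x; simp
      have B : ∀ x : G ⧸ H,
          (Nm H (α ((⟨s' x * (s x)⁻¹, hmem x⟩ : H) : G) (s x))
            * (Tt H α ((⟨s' x * (s x)⁻¹, hmem x⟩ : H) : G))⁻¹) * Tt H α (s' x)
          = Tt H α (s x) := by
        intro x
        have st := star_id H hα (⟨s' x * (s x)⁻¹, hmem x⟩ : H) (s x)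
        rw [hts x] at st
        calc (Nm H (α ((⟨s' x * (s x)⁻¹, hmem x⟩ : H) : G) (s x))
              * (Tt H α ((⟨s' x * (s x)⁻¹, hmem x⟩ : H) : G))⁻¹) * Tt H α (s' x)
            = (Nm H (α ((⟨s' x * (s x)⁻¹, hmem x⟩ : H) : G) (s x)) * Tt H α (s' x))
              * (Tt H α ((⟨s' x * (s x)⁻¹, hmem x⟩ : H) : G))⁻¹ := by
              simp [mul_comm, mul_left_comm, mul_assoc]
          _ = (Tt H α (s x) * Tt H α ((⟨s' x * (s x)⁻¹, hmem x⟩ : H) : G))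
              * (Tt H α ((⟨s' x * (s x)⁻¹, hmem x⟩ : H) : G))⁻¹ := by rw [st]
          _ = Tt H α (s x) := by simp [mul_comm, mul_left_comm, mul_assoc]
      rw [eq_mul_inv_iff_mul_eq, eq_mul_inv_iff_mul_eq]
      -- goal : nak' x y * (s x • β y) * β x = nak x y * β (x*y)
      have E4 := nak_key H hα s hs x y
      have E4' := nak_key H hα s' hs' x y
      have D2 := diffD H hα (s x) (s y) (⟨s' y * (s y)⁻¹, hmem y⟩ : H)
      rw [hts y] at D2
      have S3 := star_id H hα (⟨s' x * (s x)⁻¹, hmem x⟩ : H) (s x * s' y)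
      have ha'b' : ((⟨s' x * (s x)⁻¹, hmem x⟩ : H) : G) * (s x * s' y) = s' x * s' y := by
        rw [← mul_assoc, hts x]
      rw [ha'b'] at S3
      have S4 := star_id H hα (⟨s' x * (s x)⁻¹, hmem x⟩ : H) (s x)
      rw [hts x] at S4
      have C3 := hα ((⟨s' x * (s x)⁻¹, hmem x⟩ : H) : G) (s x) (s' y)
      rw [hts x] at C3
      have NH3 := Nm_smul_H H (⟨s' x * (s x)⁻¹, hmem x⟩ : H) (α (s x) (s' y))
      -- K'' claim
      have K2 : Tt H α (s' x * s' y) * Nm H (α (s' x) (s' y)) * Tt H α (s x)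
          = Tt H α (s' x) * Nm H (α (s x) (s' y)) * Tt H α (s x * s' y) := by
        have K0 := K2gen H hα (⟨s' x * (s x)⁻¹, hmem x⟩ : H) (s x) (s' y)
        rw [hts x] at K0
        exact K0
      -- K' claim
      have K1 : Tt H α (s' x * s' y) * Nm H (α (s' x) (s' y)) * Tt H α (s x)
            * (s x • Tt H α (s y))
          = Tt H α (s x * s y) * Nm H (α (s x) (s y)) * Tt H α (s' x)
            * (s x • Tt H α (s' y)) := by
        have key : (Tt H α (s' x * s' y) * Nm H (α (s' x) (s' y)) * Tt H α (s x)
              * (s x • Tt H α (s y)))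
              * (Nm H (α (s x) (s' y)) * Tt H α (s x * s' y))
            = (Tt H α (s x * s y) * Nm H (α (s x) (s y)) * Tt H α (s' x)
              * (s x • Tt H α (s' y)))
              * (Nm H (α (s x) (s' y)) * Tt H α (s x * s' y)) := by
          calc _ = (Tt H α (s' x * s' y) * Nm H (α (s' x) (s' y)) * Tt H α (s x))
                * (s x • Tt H α (s y) * Nm H (α (s x) (s' y)) * Tt H α (s x * s' y)) := by
                simp [mul_comm, mul_left_comm, mul_assoc]
            _ = (Tt H α (s' x) * Nm H (α (s x) (s' y)) * Tt H α (s x * s' y))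
                * (s x • Tt H α (s' y) * Nm H (α (s x) (s y)) * Tt H α (s x * s y)) := by
                rw [K2, ← D2]
            _ = _ := by simp [mul_comm, mul_left_comm, mul_assoc]
        exact mul_right_cancel key
      -- final assembly
      have key : (nakFun H α s' x y
            * (s x • (Nm H (α ((⟨s' y * (s y)⁻¹, hmem y⟩ : H) : G) (s y))
              * (Tt H α ((⟨s' y * (s y)⁻¹, hmem y⟩ : H) : G))⁻¹))
            * (Nm H (α ((⟨s' x * (s x)⁻¹, hmem x⟩ : H) : G) (s x))
              * (Tt H α ((⟨s' x * (s x)⁻¹, hmem x⟩ : H) : G))⁻¹))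
            * (Tt H α (s' x) * (s x • Tt H α (s' y)) * Tt H α (s' (x * y)))
          = (nakFun H α s x y
            * (Nm H (α ((⟨s' (x * y) * (s (x * y))⁻¹, hmem (x * y)⟩ : H) : G) (s (x * y)))
              * (Tt H α ((⟨s' (x * y) * (s (x * y))⁻¹, hmem (x * y)⟩ : H) : G))⁻¹))
            * (Tt H α (s' x) * (s x • Tt H α (s' y)) * Tt H α (s' (x * y))) := by
        calc _ = (nakFun H α s' x y * Tt H α (s' (x * y)))
              * ((Nm H (α ((⟨s' x * (s x)⁻¹, hmem x⟩ : H) : G) (s x))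
                  * (Tt H α ((⟨s' x * (s x)⁻¹, hmem x⟩ : H) : G))⁻¹) * Tt H α (s' x))
              * (s x • ((Nm H (α ((⟨s' y * (s y)⁻¹, hmem y⟩ : H) : G) (s y))
                  * (Tt H α ((⟨s' y * (s y)⁻¹, hmem y⟩ : H) : G))⁻¹) * Tt H α (s' y))) := by
              rw [smul_mul']; simp [mul_comm, mul_left_comm, mul_assoc]
          _ = (Tt H α (s' x * s' y) * Nm H (α (s' x) (s' y)))
              * Tt H α (s x) * (s x • Tt H α (s y)) := by
              rw [E4', B x, B y]
          _ = Tt H α (s x * s y) * Nm H (α (s x) (s y)) * Tt H α (s' x)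
              * (s x • Tt H α (s' y)) := by
              rw [← K1]
          _ = (nakFun H α s x y * Tt H α (s (x * y))) * Tt H α (s' x)
              * (s x • Tt H α (s' y)) := by rw [E4]
          _ = (nakFun H α s x y
              * ((Nm H (α ((⟨s' (x * y) * (s (x * y))⁻¹, hmem (x * y)⟩ : H) : G) (s (x * y)))
                * (Tt H α ((⟨s' (x * y) * (s (x * y))⁻¹, hmem (x * y)⟩ : H) : G))⁻¹)
                * Tt H α (s' (x * y))))
              * Tt H α (s' x) * (s x • Tt H α (s' y)) := by rw [B (x * y)]
          _ = _ := by simp [mul_comm, mul_left_comm, mul_assoc]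
      exact mul_right_cancel key
end
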